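/- A semi-classical channel applied by Bob yields zero maximal steered coherence: if Λ^sc maps every qubit state to a state diagonal in a fixed orthonormal basis {|k⟩}, then for any two-qubit state ρ, the state (I_A ⊗ Λ^sc)(ρ) has all steered states and its reduced state ρ_B simultaneously diagonal in {|k⟩}, so the maximal steered coherence of (I_A ⊗ Λ^sc)(ρ) is 0. -/

import Mathlib

open Matrix BigOperators Kronecker ComplexOrder

noncomputable section

def ptraceA (ρ : Matrix (Fin 2 × Fin 2) (Fin 2 × Fin 2) ℂ) :
    Matrix (Fin 2) (Fin 2) ℂ :=
  fun j j' => ∑ a, ρ (a, j) (a, j')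

def proj {n : Type*} [Fintype n] (x : n → ℂ) : Matrix n n ℂ :=
  vecMulVec x (star x)

def IsPOVMElem (M : Matrix (Fin 2) (Fin 2) ℂ) : Prop :=
  M.PosSemidef ∧ (1 - M).PosSemidef

/-- Apply a channel Λ to Bob's side of a two-qubit matrix. -/
def applyB (Λ : Matrix (Fin 2) (Fin 2) ℂ → Matrix (Fin 2) (Fin 2) ℂ)
    (ρ : Matrix (Fin 2 × Fin 2) (Fin 2 × Fin 2) ℂ) :
    Matrix (Fin 2 × Fin 2) (Fin 2 × Fin 2) ℂ :=
  fun x y => Λ (fun j j' => ρ (x.1, j) (y.1, j')) x.2 y.2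

/-- l1-coherence of the steered state of ρ for POVM element M in basis ξ. -/
def steeredCoh (ρ : Matrix (Fin 2 × Fin 2) (Fin 2 × Fin 2) ℂ)
    (M : Matrix (Fin 2) (Fin 2) ℂ) (ξ : Fin 2 → (Fin 2 → ℂ)) : ℝ :=
  (∑ i, ∑ j ∈ Finset.univ.filter (· ≠ i),
      ‖star (ξ i) ⬝ᵥ (ptraceA ((M ⊗ₖ 1) * ρ) *ᵥ ξ j)‖) /
    (((M ⊗ₖ (1 : Matrix (Fin 2) (Fin 2) ℂ)) * ρ).trace).re

/-- Maximal steered coherence with infimum over orthonormal eigenbases of ρ_B. -/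
def mscFull (ρ : Matrix (Fin 2 × Fin 2) (Fin 2 × Fin 2) ℂ) : ℝ :=
  sInf {s | ∃ ξ : Fin 2 → (Fin 2 → ℂ),
    (∀ i j, star (ξ i) ⬝ᵥ ξ j = if i = j then (1 : ℂ) else 0) ∧
    (∀ i, ∃ μ : ℝ, ptraceA ρ *ᵥ ξ i = (μ : ℂ) • ξ i) ∧
    s = sSup {c | ∃ M, IsPOVMElem M ∧
      0 < (((M ⊗ₖ (1 : Matrix (Fin 2) (Fin 2) ℂ)) * ρ).trace).re ∧
      c = steeredCoh ρ M ξ}}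

/-! A semi-classical channel is linear and its outputs are combinations of the projectors
`|k⟩⟨k|`, so they are diagonal in `{|k⟩}`. By linearity Bob's steered states of `(I ⊗ Λ)(ρ)` are
`Λ` applied to those of `ρ`, hence diagonal too, and so is `ρ_B = Λ(tr_A ρ)`; its eigenvalues
`p_k(tr_A ρ)` are real because `tr_A ρ ≥ 0`. Thus `{|k⟩}` is an eigenbasis of `ρ_B` in which
every steered coherence vanishes, while steered coherences are never negative. -/

section SemiClassical

variable {n ι : Type*} [Fintype n] [Fintype ι]

def semiClassical (e : ι → n → ℂ) (p : ι → (Matrix n n ℂ →ₗ[ℂ] ℂ)) :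
    Matrix n n ℂ →ₗ[ℂ] Matrix n n ℂ :=
  ∑ k, (p k).smulRight (proj (e k))

lemma semiClassical_apply (e : ι → n → ℂ) (p : ι → (Matrix n n ℂ →ₗ[ℂ] ℂ))
    (σ : Matrix n n ℂ) : semiClassical e p σ = ∑ k, p k σ • proj (e k) := by
  simp [semiClassical]

lemma proj_mulVec (x v : n → ℂ) : proj x *ᵥ v = (star x ⬝ᵥ v) • x :=
  (vecMulVec_mulVec x (star x) v).trans (op_smul_eq_smul _ _)

variable [DecidableEq ι] {e : ι → n → ℂ}
  (he : ∀ i j, star (e i) ⬝ᵥ e j = if i = j then (1 : ℂ) else 0)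
include he

lemma semiClassical_mulVec (p : ι → (Matrix n n ℂ →ₗ[ℂ] ℂ)) (σ : Matrix n n ℂ) (j : ι) :
    semiClassical e p σ *ᵥ e j = p j σ • e j := by
  simp [semiClassical_apply, Matrix.sum_mulVec, smul_mulVec, proj_mulVec, he]

lemma dotProduct_semiClassical_mulVec_of_ne (p : ι → (Matrix n n ℂ →ₗ[ℂ] ℂ))
    (σ : Matrix n n ℂ) {i j : ι} (hij : i ≠ j) :
    star (e i) ⬝ᵥ (semiClassical e p σ *ᵥ e j) = 0 := by
  simp [semiClassical_mulVec he, he, hij]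

end SemiClassical

lemma ptraceA_kronecker_one_mul (M : Matrix (Fin 2) (Fin 2) ℂ)
    (X : Matrix (Fin 2 × Fin 2) (Fin 2 × Fin 2) ℂ) :
    ptraceA ((M ⊗ₖ 1) * X) = ∑ a, ∑ c, M a c • X.submatrix (Prod.mk c) (Prod.mk a) := by
  ext j j'
  simp [ptraceA, Matrix.mul_apply, Fintype.sum_prod_type, Matrix.one_apply, Matrix.sum_apply]

lemma ptraceA_kronecker_one_mul_applyB
    (Λ : Matrix (Fin 2) (Fin 2) ℂ →ₗ[ℂ] Matrix (Fin 2) (Fin 2) ℂ)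
    (M : Matrix (Fin 2) (Fin 2) ℂ) (ρ : Matrix (Fin 2 × Fin 2) (Fin 2 × Fin 2) ℂ) :
    ptraceA ((M ⊗ₖ 1) * applyB Λ ρ) = Λ (ptraceA ((M ⊗ₖ 1) * ρ)) := by
  simp only [ptraceA_kronecker_one_mul, map_sum, map_smul]
  -- the blocks of `applyB Λ ρ` are, by definition, `Λ` of the blocks of `ρ`
  rfl

lemma ptraceA_eq_sum_submatrix (ρ : Matrix (Fin 2 × Fin 2) (Fin 2 × Fin 2) ℂ) :
    ptraceA ρ = ∑ a, ρ.submatrix (Prod.mk a) (Prod.mk a) := by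
  ext j j'
  simp [ptraceA, Matrix.sum_apply]

lemma Matrix.PosSemidef.ptraceA {ρ : Matrix (Fin 2 × Fin 2) (Fin 2 × Fin 2) ℂ} (hρ : ρ.PosSemidef) :
    (ptraceA ρ).PosSemidef := by
  rw [ptraceA_eq_sum_submatrix]
  exact posSemidef_sum _ fun a _ => hρ.submatrix _

lemma steeredCoh_eq_zero_of_offDiag (ρ : Matrix (Fin 2 × Fin 2) (Fin 2 × Fin 2) ℂ)
    (M : Matrix (Fin 2) (Fin 2) ℂ) (ξ : Fin 2 → (Fin 2 → ℂ))
    (hoff : ∀ i j, i ≠ j → star (ξ i) ⬝ᵥ (ptraceA ((M ⊗ₖ 1) * ρ) *ᵥ ξ j) = 0) :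
    steeredCoh ρ M ξ = 0 := by
  rw [steeredCoh, div_eq_zero_iff]
  left
  refine Finset.sum_eq_zero fun i _ => Finset.sum_eq_zero fun j hj => ?_
  rw [hoff i j (Finset.mem_filter.mp hj).2.symm, norm_zero]

lemma steeredCoh_nonneg (ρ : Matrix (Fin 2 × Fin 2) (Fin 2 × Fin 2) ℂ)
    (M : Matrix (Fin 2) (Fin 2) ℂ) (ξ : Fin 2 → (Fin 2 → ℂ))
    (htr : 0 ≤ (((M ⊗ₖ (1 : Matrix (Fin 2) (Fin 2) ℂ)) * ρ).trace).re) :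
    0 ≤ steeredCoh ρ M ξ :=
  div_nonneg (Finset.sum_nonneg fun _ _ => Finset.sum_nonneg fun _ _ => norm_nonneg _) htr

lemma mscFull_eq_zero_of_offDiag (ρ : Matrix (Fin 2 × Fin 2) (Fin 2 × Fin 2) ℂ)
    (ξ : Fin 2 → (Fin 2 → ℂ))
    (hξ : ∀ i j, star (ξ i) ⬝ᵥ ξ j = if i = j then (1 : ℂ) else 0)
    (heig : ∀ i, ∃ μ : ℝ, ptraceA ρ *ᵥ ξ i = (μ : ℂ) • ξ i)
    (hoff : ∀ M i j, i ≠ j → star (ξ i) ⬝ᵥ (ptraceA ((M ⊗ₖ 1) * ρ) *ᵥ ξ j) = 0) :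
    mscFull ρ = 0 := by
  rw [mscFull]
  refine IsLeast.csInf_eq ⟨⟨ξ, hξ, heig, le_antisymm ?_ ?_⟩, ?_⟩
  · exact Real.sSup_nonneg fun c ⟨M, _, _, hc⟩ =>
      (hc.trans (steeredCoh_eq_zero_of_offDiag ρ M ξ (hoff M))).ge
  · exact Real.sSup_nonpos fun c ⟨M, _, _, hc⟩ =>
      (hc.trans (steeredCoh_eq_zero_of_offDiag ρ M ξ (hoff M))).le
  · rintro s ⟨ξ', -, -, rfl⟩
    exact Real.sSup_nonneg fun c ⟨M, _, htr, hc⟩ => hc ▸ steeredCoh_nonneg ρ M ξ' htr.le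

theorem stmt8_general (ρ : Matrix (Fin 2 × Fin 2) (Fin 2 × Fin 2) ℂ)
    (hρ : ρ.PosSemidef ∧ ρ.trace = 1)
    (e : Fin 2 → (Fin 2 → ℂ))
    (he : ∀ i j, star (e i) ⬝ᵥ e j = if i = j then (1 : ℂ) else 0)
    (Λ : Matrix (Fin 2) (Fin 2) ℂ → Matrix (Fin 2) (Fin 2) ℂ)
    (pk : Fin 2 → (Matrix (Fin 2) (Fin 2) ℂ →ₗ[ℂ] ℂ))
    (hΛ : ∀ σ, Λ σ = ∑ k, pk k σ • proj (e k))
    (hpos : ∀ k σ, σ.PosSemidef → 0 ≤ (pk k σ).re ∧ (pk k σ).im = 0) :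
    (∀ i j, i ≠ j → star (e i) ⬝ᵥ (ptraceA (applyB Λ ρ) *ᵥ e j) = 0) ∧
    (∀ M, IsPOVMElem M →
      0 < (((M ⊗ₖ (1 : Matrix (Fin 2) (Fin 2) ℂ)) * applyB Λ ρ).trace).re →
      ∀ i j, i ≠ j →
        star (e i) ⬝ᵥ (ptraceA ((M ⊗ₖ 1) * applyB Λ ρ) *ᵥ e j) = 0) ∧
    mscFull (applyB Λ ρ) = 0 := by
  obtain rfl : Λ = semiClassical e pk :=
    funext fun σ => (hΛ σ).trans (semiClassical_apply e pk σ).symm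
  have hoff : ∀ (M : Matrix (Fin 2) (Fin 2) ℂ) i j, i ≠ j →
      star (e i) ⬝ᵥ (ptraceA ((M ⊗ₖ 1) * applyB (semiClassical e pk) ρ) *ᵥ e j) = 0 :=
    fun M i j hij => by
      rw [ptraceA_kronecker_one_mul_applyB]
      exact dotProduct_semiClassical_mulVec_of_ne he pk _ hij
  have hreduced : ptraceA (applyB (semiClassical e pk) ρ) = semiClassical e pk (ptraceA ρ) := by
    simpa using ptraceA_kronecker_one_mul_applyB (semiClassical e pk) 1 ρ
  have heig : ∀ i, ∃ μ : ℝ,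
      ptraceA (applyB (semiClassical e pk) ρ) *ᵥ e i = (μ : ℂ) • e i := fun i =>
    ⟨(pk i (ptraceA ρ)).re, by
      rw [hreduced, semiClassical_mulVec he,
        Complex.conj_eq_iff_re.mp (Complex.conj_eq_iff_im.mpr (hpos i _ hρ.1.ptraceA).2)]⟩
  refine ⟨fun i j hij => ?_, fun M _ _ => hoff M, mscFull_eq_zero_of_offDiag _ e he heig hoff⟩
  simpa using hoff 1 i j hij

/-- a semi-classical channel on Bob's side gives reduced and steered
states all diagonal in the fixed basis {|k⟩}, hence zero maximal steered coherence. -/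
theorem stmt8 (ρ : Matrix (Fin 2 × Fin 2) (Fin 2 × Fin 2) ℂ)
    (hρ : ρ.PosSemidef ∧ ρ.trace = 1)
    (e : Fin 2 → (Fin 2 → ℂ))
    (he : ∀ i j, star (e i) ⬝ᵥ e j = if i = j then (1 : ℂ) else 0)
    (Λ : Matrix (Fin 2) (Fin 2) ℂ → Matrix (Fin 2) (Fin 2) ℂ)
    (pk : Fin 2 → (Matrix (Fin 2) (Fin 2) ℂ →ₗ[ℂ] ℂ))
    (hΛ : ∀ σ, Λ σ = ∑ k, pk k σ • proj (e k))
    (hpos : ∀ k σ, σ.PosSemidef → 0 ≤ (pk k σ).re ∧ (pk k σ).im = 0)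
    (htr : ∀ σ : Matrix (Fin 2) (Fin 2) ℂ, ∑ k, pk k σ = σ.trace) :
    (∀ i j, i ≠ j → star (e i) ⬝ᵥ (ptraceA (applyB Λ ρ) *ᵥ e j) = 0) ∧
    (∀ M, IsPOVMElem M →
      0 < (((M ⊗ₖ (1 : Matrix (Fin 2) (Fin 2) ℂ)) * applyB Λ ρ).trace).re →
      ∀ i j, i ≠ j →
        star (e i) ⬝ᵥ (ptraceA ((M ⊗ₖ 1) * applyB Λ ρ) *ᵥ e j) = 0) ∧
    mscFull (applyB Λ ρ) = 0 :=
  stmt8_general ρ hρ e he Λ pk hΛ hpos
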